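/- For every k ≥ 1 and every pointed path connected space (X, x₀), the Peano map p : PX → X induces an isomorphism of homotopy groups π_k(PX, x₀) ≅ π_k(X, x₀). -/

import Mathlib

/-- The universal Peano space topology on `X`. -/
def peanoTopology (X : Type*) [TopologicalSpace X] : TopologicalSpace X :=
  TopologicalSpace.generateFrom
    {s | ∃ (U : Set X) (x : X), IsOpen U ∧ x ∈ U ∧ s = pathComponentIn U x}

/-- The universal Peano space `PX`: same underlying set, Peano topology. -/
def Peano (X : Type*) := X

instance (X : Type*) [TopologicalSpace X] : TopologicalSpace (Peano X) := peanoTopology X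

/-- The universal Peano map, as a function (it is the identity). -/
def peanoMap (X : Type*) [TopologicalSpace X] : Peano X → X := id

/-!
`PX` and `X` have the same points, and a map from a locally path connected space is continuous
into `PX` as soon as it is continuous into `X`: the preimage of a path component of an open
`U ⊆ X` is a union of path components of an open set of the domain. Cubes `I^N` and cylinders
`I × I^N` are locally path connected, so generalized loops in `PX` and in `X`, and homotopies
between them relative to the boundary, are literally the same functions. Hence the identity
induces a bijection of homotopy groups, and it is a homomorphism because pushing loops forward
along any continuous map commutes with concatenation.
-/

open Set Topology Topology.Homotopy unitInterval

instance unitInterval.locallyPathConnectedSpace : LocallyPathConnectedSpace I :=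
  (isQuotientMap_projIcc (a := (0 : ℝ)) (b := 1) (h := zero_le_one)).locallyPathConnectedSpace

instance unitInterval.pathConnectedSpace : PathConnectedSpace I :=
  (isQuotientMap_projIcc (a := (0 : ℝ)) (b := 1) (h := zero_le_one)).surjective.pathConnectedSpace
    continuous_projIcc

theorem Continuous.mapsTo_pathComponentIn {X Y : Type*} [TopologicalSpace X] [TopologicalSpace Y]
    {f : X → Y} (hf : Continuous f) (U : Set Y) (x : X) :
    MapsTo f (pathComponentIn (f ⁻¹' U) x) (pathComponentIn U (f x)) :=
  fun _ hy => (hy.map hf).mono (image_preimage_subset f U)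

namespace GenLoop

variable {N X Y : Type*} [TopologicalSpace X] [TopologicalSpace Y] {x : X} {y : Y}

def map (f : C(X, Y)) (hf : f x = y) (p : Ω^ N X x) : Ω^ N Y y :=
  ⟨f.comp p, fun t ht => (congrArg f (GenLoop.boundary p t ht)).trans hf⟩

theorem Homotopic.map {p q : Ω^ N X x} (f : C(X, Y)) (hf : f x = y) (h : Homotopic p q) :
    Homotopic (GenLoop.map f hf p) (GenLoop.map f hf q) :=
  h.comp_continuousMap f

theorem map_transAt [DecidableEq N] (f : C(X, Y)) (hf : f x = y) (i : N) (p q : Ω^ N X x) :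
    map f hf (transAt i p q) = transAt i (map f hf p) (map f hf q) := by
  ext t
  simp only [map, transAt, coe_copy, mk_apply, ContinuousMap.comp_apply, coe_coe]
  split_ifs <;> rfl

end GenLoop

noncomputable def HomotopyGroup.map {N X Y : Type*} [TopologicalSpace X] [TopologicalSpace Y]
    {x : X} {y : Y} [DecidableEq N] [Nonempty N] (f : C(X, Y)) (hf : f x = y) :
    HomotopyGroup N X x →* HomotopyGroup N Y y :=
  MonoidHom.mk' (Quotient.map (GenLoop.map f hf) fun _ _ => GenLoop.Homotopic.map f hf) <| by
    intro u v
    induction u, v using Quotient.inductionOn₂ with | _ p q => ?_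
    let i := Classical.arbitrary N
    exact (congrArg _ (HomotopyGroup.mul_spec (i := i))).trans <|
      (congrArg _ (GenLoop.map_transAt f hf i q p)).trans HomotopyGroup.mul_spec.symm

section Peano

variable {X : Type*} [TopologicalSpace X]

theorem peanoTopology_le : peanoTopology X ≤ ‹TopologicalSpace X› := fun U hU => by
  have hU_eq : U = ⋃ x ∈ U, pathComponentIn U x :=
    Subset.antisymm (fun x hx => mem_biUnion hx (mem_pathComponentIn_self hx))
      (iUnion₂_subset fun _ _ => pathComponentIn_subset)
  rw [hU_eq]
  exact @isOpen_biUnion _ _ (peanoTopology X) _ _ fun x hx => .basic _ ⟨U, x, hU, hx, rfl⟩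

theorem continuous_peanoMap : Continuous (peanoMap X) :=
  continuous_id_of_le peanoTopology_le

theorem Continuous.peano {Z : Type*} [TopologicalSpace Z] [LocallyPathConnectedSpace Z]
    {f : Z → X} (hf : Continuous f) : Continuous[_, peanoTopology X] f := by
  refine continuous_generateFrom_iff.2 ?_
  rintro _ ⟨U, x, hU, -, rfl⟩
  refine isOpen_iff_mem_nhds.2 fun z (hz : f z ∈ pathComponentIn U x) => ?_
  have hzU : f z ∈ U := pathComponentIn_subset hz
  refine Filter.mem_of_superset (((hU.preimage hf).pathComponentIn z).mem_nhds
    (mem_pathComponentIn_self (F := f ⁻¹' U) hzU)) fun y hy => ?_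
  rw [mem_preimage, ← pathComponentIn_congr hz]
  exact hf.mapsTo_pathComponentIn U z hy

def peanoContinuousMap (X : Type*) [TopologicalSpace X] : C(Peano X, X) :=
  ⟨peanoMap X, continuous_peanoMap⟩

def ContinuousMap.toPeano {Z : Type*} [TopologicalSpace Z] [LocallyPathConnectedSpace Z]
    (f : C(Z, X)) : C(Z, Peano X) :=
  ⟨f, f.continuous.peano⟩

def ContinuousMap.HomotopyRel.toPeano {Z : Type*} [TopologicalSpace Z]
    [LocallyPathConnectedSpace Z] {f₀ f₁ : C(Z, X)} {S : Set Z} (H : f₀.HomotopyRel f₁ S) :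
    f₀.toPeano.HomotopyRel f₁.toPeano S where
  toContinuousMap := H.toContinuousMap.toPeano
  map_zero_left := H.map_zero_left
  map_one_left := H.map_one_left
  prop' := H.prop'

def GenLoop.toPeano {N : Type*} {x : X} (p : Ω^ N X x) : Ω^ N (Peano X) x :=
  ⟨p.1.toPeano, p.2⟩

theorem GenLoop.Homotopic.toPeano {N : Type*} {x : X} {p q : Ω^ N X x} (h : Homotopic p q) :
    Homotopic (GenLoop.toPeano p) (GenLoop.toPeano q) :=
  Nonempty.map ContinuousMap.HomotopyRel.toPeano h

noncomputable def HomotopyGroup.peanoMulEquiv (N : Type*) [DecidableEq N] [Nonempty N]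
    (x : Peano X) : HomotopyGroup N (Peano X) x ≃* HomotopyGroup N X (peanoMap X x) :=
  { HomotopyGroup.map (peanoContinuousMap X) rfl with
    invFun := Quotient.map GenLoop.toPeano fun _ _ => GenLoop.Homotopic.toPeano
    left_inv := by rintro ⟨p⟩; rfl
    right_inv := by rintro ⟨p⟩; rfl }

end Peano

theorem peano_homotopyGroup_iso_general {X : Type*} [TopologicalSpace X]
    (x₀ : X) (n : ℕ) :
    ∃ e : @MulEquiv (HomotopyGroup (Fin (n + 1)) (Peano X) x₀) (HomotopyGroup (Fin (n + 1)) X x₀)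
        (@MulOne.toMul _ (@MulOneClass.toMulOne _ (@Monoid.toMulOneClass _ (@DivInvMonoid.toMonoid _
          (@Group.toDivInvMonoid _ (@HomotopyGroup.group (Peano X) _ x₀ (Fin (n + 1)) _ _)))))) _,
      ∀ (a : GenLoop (Fin (n + 1)) (Peano X) x₀) (b : GenLoop (Fin (n + 1)) X x₀),
        (∀ p, (b : C((Fin (n + 1)) → unitInterval, X)) p
            = peanoMap X ((a : C((Fin (n + 1)) → unitInterval, Peano X)) p)) →
        e (Quotient.mk (@GenLoop.Homotopic.setoid (Peano X) _ (Fin (n + 1)) x₀) a)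
          = Quotient.mk (GenLoop.Homotopic.setoid (Fin (n + 1)) x₀) b :=
  ⟨HomotopyGroup.peanoMulEquiv _ x₀, fun _ _ hab =>
    congrArg _ (GenLoop.ext _ _ fun t => (hab t).symm)⟩

/-- For every `k ≥ 1` (written `k = n + 1`) and every pointed path connected space
`(X, x₀)`, the Peano map induces an isomorphism `π_k(PX, x₀) ≅ π_k(X, x₀)`:
there is a group isomorphism sending the class of each generalized loop in `PX`
to the class of the loop with the same underlying function in `X`. -/
theorem peano_homotopyGroup_iso {X : Type*} [TopologicalSpace X] [PathConnectedSpace X]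
    (x₀ : X) (n : ℕ) :
    ∃ e : @MulEquiv (HomotopyGroup (Fin (n + 1)) (Peano X) x₀) (HomotopyGroup (Fin (n + 1)) X x₀)
        (@MulOne.toMul _ (@MulOneClass.toMulOne _ (@Monoid.toMulOneClass _ (@DivInvMonoid.toMonoid _
          (@Group.toDivInvMonoid _ (@HomotopyGroup.group (Peano X) _ x₀ (Fin (n + 1)) _ _)))))) _,
      ∀ (a : GenLoop (Fin (n + 1)) (Peano X) x₀) (b : GenLoop (Fin (n + 1)) X x₀),
        (∀ p, (b : C((Fin (n + 1)) → unitInterval, X)) p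
            = peanoMap X ((a : C((Fin (n + 1)) → unitInterval, Peano X)) p)) →
        e (Quotient.mk (@GenLoop.Homotopic.setoid (Peano X) _ (Fin (n + 1)) x₀) a)
          = Quotient.mk (GenLoop.Homotopic.setoid (Fin (n + 1)) x₀) b :=
  peano_homotopyGroup_iso_general x₀ n
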